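/- arXiv:math/0001014 — 4 statements merged into one kernel-verified Lean document; each statement's English description precedes it below -/
import Mathlib

section
/- Let β' and β be elements of Φ ∪ {0} with β' < β such that no element of Φ lies strictly between β' and β. Then for every v ∈ J there is no integer m with β'·v < m < β·v. -/
/-! If an integer `m` satisfies `β' v < m < β v` with `0 ≤ β'`, then `v ≠ 0` and `m / v` is a
positive rational with denominator dividing `v` lying strictly between `β'` and `β ≤ 1`; it is
therefore an element of `Φ` inside the gap. -/

lemma ne_zero_of_mul_lt_lt {K : Type*} [MulZeroClass K] [Preorder K] {a b x v : K}
    (hax : a * v < x) (hxb : x < b * v) : v ≠ 0 := by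
  rintro rfl
  rw [mul_zero] at hax hxb
  exact lt_irrefl 0 (hax.trans hxb)

lemma div_mem_Ioo_of_mul_lt_lt {K : Type*} [Field K] [LinearOrder K] [IsStrictOrderedRing K]
    {a b x v : K} (hv : 0 < v) (hax : a * v < x) (hxb : x < b * v) :
    x / v ∈ Set.Ioo a b :=
  ⟨(lt_div_iff₀ hv).2 hax, (div_lt_iff₀ hv).2 hxb⟩

lemma div_mem_of_mul_lt_lt {J : Finset ℕ} {β' β : ℚ} (hβ' : 0 ≤ β') (hβ : β ≤ 1)
    {v : ℕ} (hv : v ∈ J) {m : ℤ} (hβ'm : β' * v < m) (hmβ : (m : ℚ) < β * v) :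
    (m : ℚ) / v ∈ {γ : ℚ | 0 < γ ∧ γ ≤ 1 ∧ ∃ v ∈ J, ∃ m : ℤ, (v : ℚ) * γ = m} ∧
      (m : ℚ) / v ∈ Set.Ioo β' β := by
  have hv0 : (0 : ℚ) < v :=
    Nat.cast_pos.2 (Nat.pos_of_ne_zero (by exact_mod_cast ne_zero_of_mul_lt_lt hβ'm hmβ))
  have hmem := div_mem_Ioo_of_mul_lt_lt hv0 hβ'm hmβ
  exact ⟨⟨hβ'.trans_lt hmem.1, hmem.2.le.trans hβ, v, hv, m, mul_div_cancel₀ _ hv0.ne'⟩, hmem⟩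

theorem stmt_1_general (J : Finset ℕ)
    (Φ : Set ℚ)
    (hΦ : Φ = {β : ℚ | 0 < β ∧ β ≤ 1 ∧ ∃ v ∈ J, ∃ m : ℤ, (v : ℚ) * β = m})
    (β' β : ℚ) (hβ' : β' ∈ Φ ∪ {0}) (hβ : β ∈ Φ ∪ {0}) (hlt : β' < β)
    (hcons : ∀ γ ∈ Φ, ¬(β' < γ ∧ γ < β)) :
    ∀ v ∈ J, ¬ ∃ m : ℤ, β' * (v : ℚ) < (m : ℚ) ∧ (m : ℚ) < β * (v : ℚ) := by
  subst hΦ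
  rintro v hv ⟨m, hβ'm, hmβ⟩
  have hβ'0 : 0 ≤ β' := by
    rcases hβ' with h | rfl
    exacts [h.1.le, le_rfl]
  have hβ1 : β ≤ 1 := by
    rcases hβ with h | rfl
    exacts [h.2.1, absurd (hβ'0.trans_lt hlt) (lt_irrefl 0)]
  obtain ⟨hΦmem, hgap⟩ := div_mem_of_mul_lt_lt hβ'0 hβ1 hv hβ'm hmβ
  exact hcons _ hΦmem hgap

/-- If `β' < β` are elements of `Φ ∪ {0}` with no element of `Φ`
strictly between them, then for every `v ∈ J` there is no integer `m` with
`β'·v < m < β·v`. -/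
theorem stmt_1 (J : Finset ℕ) (hJne : J.Nonempty) (hJpos : ∀ v ∈ J, 0 < v)
    (Φ : Set ℚ)
    (hΦ : Φ = {β : ℚ | 0 < β ∧ β ≤ 1 ∧ ∃ v ∈ J, ∃ m : ℤ, (v : ℚ) * β = m})
    (β' β : ℚ) (hβ' : β' ∈ Φ ∪ {0}) (hβ : β ∈ Φ ∪ {0}) (hlt : β' < β)
    (hcons : ∀ γ ∈ Φ, ¬(β' < γ ∧ γ < β)) :
    ∀ v ∈ J, ¬ ∃ m : ℤ, β' * (v : ℚ) < (m : ℚ) ∧ (m : ℚ) < β * (v : ℚ) :=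
  stmt_1_general J Φ hΦ β' β hβ' hβ hlt hcons
end

section
/- Let β' and β be elements of Φ ∪ {0} with β' < β such that no element of Φ lies strictly between β' and β, and write β = p/n in lowest terms (p, n coprime positive integers). Then for every v ∈ J: if n divides v then ⌊β'·v⌋ = ⌊β·v⌋ − 1, and if n does not divide v then ⌊β'·v⌋ = ⌊β·v⌋. -/
/-- If `β' < β` are consecutive elements of `Φ ∪ {0}` and
`β = p/n` in lowest terms, then for `v ∈ J`: `⌊β'v⌋ = ⌊βv⌋ - 1` if `n ∣ v`,
and `⌊β'v⌋ = ⌊βv⌋` otherwise. -/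
theorem stmt_2 (J : Finset ℕ) (hJne : J.Nonempty) (hJpos : ∀ v ∈ J, 0 < v)
    (Φ : Set ℚ)
    (hΦ : Φ = {β : ℚ | 0 < β ∧ β ≤ 1 ∧ ∃ v ∈ J, ∃ m : ℤ, (v : ℚ) * β = m})
    (β' β : ℚ) (hβ' : β' ∈ Φ ∪ {0}) (hβ : β ∈ Φ ∪ {0}) (hlt : β' < β)
    (hcons : ∀ γ ∈ Φ, ¬(β' < γ ∧ γ < β))
    (p n : ℕ) (hp : 0 < p) (hn : 0 < n) (hcop : Nat.Coprime p n)
    (hβpn : β = (p : ℚ) / (n : ℚ)) :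
    ∀ v ∈ J, (n ∣ v → ⌊β' * (v : ℚ)⌋ = ⌊β * (v : ℚ)⌋ - 1) ∧
      (¬ n ∣ v → ⌊β' * (v : ℚ)⌋ = ⌊β * (v : ℚ)⌋) := by
  subst hΦ
  have hβ'0 : 0 ≤ β' := by
    rcases hβ' with h | h
    · exact h.1.le
    · simp only [Set.mem_singleton_iff] at h; simp [h]
  have hβpos : 0 < β := lt_of_le_of_lt hβ'0 hlt
  have hβ1 : β ≤ 1 := by
    rcases hβ with h | h
    · exact h.2.1
    · simp only [Set.mem_singleton_iff] at h; exact absurd h hβpos.ne'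
  have hn0 : (0:ℚ) < n := by exact_mod_cast hn
  have hp0 : (0:ℚ) < p := by exact_mod_cast hp
  intro v hv
  have hvpos : 0 < v := hJpos v hv
  have hv0 : (0:ℚ) < v := by exact_mod_cast hvpos
  constructor
  · -- n ∣ v
    rintro ⟨k, rfl⟩
    have hk : 0 < k := by
      rcases Nat.eq_zero_or_pos k with h | h
      · simp [h] at hvpos
      · exact h
    have hnk0 : (0:ℚ) < ((n*k : ℕ) : ℚ) := by positivity
    have hβv : β * ((n*k : ℕ) : ℚ) = ((p*k : ℕ) : ℚ) := by
      rw [hβpn]; push_cast; field_simp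
    rw [hβv, Int.floor_natCast, Int.floor_eq_iff]
    have hupper : β' * ((n*k : ℕ) : ℚ) < ((p*k : ℕ) : ℚ) := by
      rw [← hβv]; exact mul_lt_mul_of_pos_right hlt hnk0
    refine ⟨?_, by push_cast at hupper ⊢; linarith⟩
    by_cases hpk : p * k = 1
    · have h1 : ((p*k : ℕ) : ℚ) = 1 := by rw [hpk]; norm_num
      push_cast [hpk]
      have : (0:ℚ) ≤ β' * ((n:ℚ)*(k:ℚ)) := mul_nonneg hβ'0 (by positivity)
      linarith
    · have hpk1 : 0 < p * k := Nat.mul_pos hp hk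
      have hpk2 : 2 ≤ p * k := by omega
      set γ : ℚ := (((p*k : ℕ) : ℚ) - 1) / ((n*k : ℕ) : ℚ) with hγ
      have hγβ : γ < β := by
        rw [hγ, div_lt_iff₀ hnk0, hβv]; push_cast; linarith
      have hγΦ : 0 < γ ∧ γ ≤ 1 ∧ ∃ w ∈ J, ∃ m : ℤ, (w : ℚ) * γ = m := by
        refine ⟨?_, le_trans hγβ.le hβ1, ⟨n*k, hv, (p*k : ℤ) - 1, ?_⟩⟩
        · rw [hγ]; apply div_pos _ hnk0; push_cast
          have : (2:ℚ) ≤ (p:ℚ)*(k:ℚ) := by exact_mod_cast hpk2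
          linarith
        · rw [hγ]; push_cast; field_simp
      have := hcons γ hγΦ
      have hγβ' : γ ≤ β' := by
        by_contra hc
        exact this ⟨lt_of_not_ge hc, hγβ⟩
      have := mul_le_mul_of_nonneg_right hγβ' hnk0.le
      rw [hγ, div_mul_cancel₀ _ hnk0.ne'] at this
      push_cast at this ⊢; linarith
  · -- ¬ n ∣ v
    intro hndvd
    set m : ℤ := ⌊β * (v : ℚ)⌋ with hm
    have hm0 : 0 ≤ m := by
      rw [hm]; exact Int.floor_nonneg.mpr (by positivity)
    have hnotint : β * (v : ℚ) ≠ (m : ℚ) := by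
      intro hc
      rw [hβpn] at hc
      have : (p : ℚ) * v = m * n := by field_simp at hc; linarith
      have hpv : (p * v : ℤ) = m * n := by exact_mod_cast this
      have : (n : ℤ) ∣ (p : ℤ) * v := ⟨m, by linarith⟩
      have hdn : n ∣ p * v := by exact_mod_cast this
      exact hndvd (Nat.Coprime.dvd_of_dvd_mul_left (hcop.symm) hdn)
    have hmlt : (m : ℚ) < β * v := lt_of_le_of_ne (Int.floor_le _) (Ne.symm hnotint)
    have hupper : β' * (v:ℚ) < (m:ℚ) + 1 := by
      have := Int.lt_floor_add_one (β * (v:ℚ))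
      have h2 : β' * (v:ℚ) < β * v := mul_lt_mul_of_pos_right hlt hv0
      rw [← hm] at this
      linarith
    rw [Int.floor_eq_iff]
    refine ⟨?_, hupper⟩
    rcases eq_or_lt_of_le hm0 with h0 | h1
    · rw [← h0]; push_cast; positivity
    · set γ : ℚ := (m : ℚ) / (v : ℚ) with hγ
      have hγβ : γ < β := by rw [hγ, div_lt_iff₀ hv0]; linarith
      have hγΦ : 0 < γ ∧ γ ≤ 1 ∧ ∃ w ∈ J, ∃ mm : ℤ, (w : ℚ) * γ = mm := by
        refine ⟨?_, le_trans hγβ.le hβ1, ⟨v, hv, m, ?_⟩⟩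
        · rw [hγ]; apply div_pos _ hv0; exact_mod_cast h1
        · rw [hγ]; field_simp
      have hγβ' : γ ≤ β' := by
        by_contra hc
        exact hcons γ hγΦ ⟨lt_of_not_ge hc, hγβ⟩
      have := mul_le_mul_of_nonneg_right hγβ' hv0.le
      rw [hγ, div_mul_cancel₀ _ hv0.ne'] at this
      linarith
end

section
/- Let β' and β be consecutive elements of Φ ∪ {0} with β' < β, write β = p/n in lowest terms, let d : J → ℕ be any function, and let p₀ ≥ 1 be an integer. Define e(p₀, γ) = (1/2)·∑_{v∈J} d(v)·((p₀−1)v + ⌊γv⌋)·((p₀−1)v + ⌊γv⌋ + 1) for γ ∈ Φ ∪ {0}. Then e(p₀, β) = e(p₀, β') + ∑_{v∈J, n∣v} ((p₀−1)v + βv)·d(v), where for n ∣ v the number βv = pv/n is an integer. -/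
/-! Between two consecutive elements `β' < β` of `Φ ∪ {0}` the interval `(β' v, β v)` contains no
integer for any `v ∈ J`, since an integer `k` there would give the element `k / v` of `Φ` strictly
between them. Hence `⌊β' v⌋ = ⌈β v⌉ - 1`: the floor drops by one exactly when `β v = p v / n` is an
integer, i.e. when `n ∣ v`, and is unchanged otherwise. When it drops from `a` to `a - 1`, the
summand `a (a + 1) / 2` of `e` drops by `a`, which is the claimed correction term. -/

open Finset

theorem Int.floor_eq_ceil_sub_one_of_forall_intCast_notMem_Ioo {R : Type*} [Ring R]
    [LinearOrder R] [FloorRing R] [IsOrderedRing R] {x y : R} (hxy : x < y)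
    (h : ∀ k : ℤ, (k : R) ∉ Set.Ioo x y) : ⌊x⌋ = ⌈y⌉ - 1 := by
  refine le_antisymm (by linarith [Int.floor_lt_ceil_of_lt hxy]) (Int.le_floor.mpr ?_)
  by_contra! hlt
  exact h (⌈y⌉ - 1) ⟨hlt, by push_cast; exact sub_lt_iff_lt_add.mpr (Int.ceil_lt_add_one y)⟩

theorem Rat.natCast_div_mul_mem_range_intCast_iff {p n v : ℕ} (hn : 0 < n)
    (hcop : p.Coprime n) : (p / n * v : ℚ) ∈ Set.range Int.cast ↔ n ∣ v := by
  constructor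
  · rintro ⟨m, hm⟩
    have hpv : ((p * v : ℕ) : ℤ) = m * n := by
      have : ((p * v : ℕ) : ℚ) = m * n := by
        rw [hm]; push_cast; field_simp
      exact_mod_cast this
    exact hcop.symm.dvd_of_dvd_mul_left (Int.natCast_dvd_natCast.mp ⟨m, by rw [hpv, mul_comm]⟩)
  · rintro ⟨k, rfl⟩
    exact ⟨p * k, by push_cast; field_simp⟩

theorem intCast_notMem_Ioo_of_consecutive {J : Finset ℕ} {β' β : ℚ} (hβ'0 : 0 ≤ β')
    (hβ1 : β ≤ 1)
    (hcons : ∀ γ ∈ {γ : ℚ | 0 < γ ∧ γ ≤ 1 ∧ ∃ v ∈ J, ∃ m : ℤ, (v : ℚ) * γ = m},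
      ¬(β' < γ ∧ γ < β))
    {v : ℕ} (hv : v ∈ J) (hvpos : 0 < v) (k : ℤ) :
    (k : ℚ) ∉ Set.Ioo (β' * v) (β * v) := by
  rintro ⟨hk', hk⟩
  have hv0 : (0 : ℚ) < v := by exact_mod_cast hvpos
  have hγβ : k / v < β := (div_lt_iff₀ hv0).mpr hk
  have hγpos : 0 < (k / v : ℚ) := div_pos ((mul_nonneg hβ'0 hv0.le).trans_lt hk') hv0
  refine hcons (k / v) ⟨hγpos, hγβ.le.trans hβ1, v, hv, k, ?_⟩ ⟨(lt_div_iff₀ hv0).mpr hk', hγβ⟩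
  field_simp

theorem stmt_3_general (J : Finset ℕ) (hJpos : ∀ v ∈ J, 0 < v)
    (Φ : Set ℚ)
    (hΦ : Φ = {β : ℚ | 0 < β ∧ β ≤ 1 ∧ ∃ v ∈ J, ∃ m : ℤ, (v : ℚ) * β = m})
    (β' β : ℚ) (hβ' : β' ∈ Φ ∪ {0}) (hβ : β ∈ Φ ∪ {0}) (hlt : β' < β)
    (hcons : ∀ γ ∈ Φ, ¬(β' < γ ∧ γ < β))
    (p n : ℕ) (hn : 0 < n) (hcop : Nat.Coprime p n)
    (hβpn : β = (p : ℚ) / (n : ℚ))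
    (d : ℕ → ℕ) (p₀ : ℕ)
    (e : ℚ → ℚ)
    (he : ∀ γ : ℚ, e γ = (1/2 : ℚ) * ∑ v ∈ J, (d v : ℚ) *
        (((p₀ : ℚ) - 1) * (v : ℚ) + (⌊γ * (v : ℚ)⌋ : ℚ)) *
        (((p₀ : ℚ) - 1) * (v : ℚ) + (⌊γ * (v : ℚ)⌋ : ℚ) + 1)) :
    e β = e β' + ∑ v ∈ J.filter (fun v => n ∣ v),
        (((p₀ : ℚ) - 1) * (v : ℚ) + β * (v : ℚ)) * (d v : ℚ) ∧
    ∀ v ∈ J, n ∣ v → ∃ m : ℤ, β * (v : ℚ) = (m : ℚ) := by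
  subst hΦ hβpn
  have hβ'0 : 0 ≤ β' := by
    rcases hβ' with h | rfl
    exacts [h.1.le, le_rfl]
  have hβ1 : (p / n : ℚ) ≤ 1 := by
    rcases hβ with h | h
    exacts [h.2.1, by linarith [Set.mem_singleton_iff.mp h]]
  have hint := fun v => Rat.natCast_div_mul_mem_range_intCast_iff (v := v) hn hcop
  refine ⟨?_, fun v _ hdvd => ((hint v).mpr hdvd).imp fun m hm => hm.symm⟩
  rw [he, he, mul_sum, mul_sum, sum_filter, ← sum_add_distrib]
  refine sum_congr rfl fun v hv => ?_
  have hfloor := Int.floor_eq_ceil_sub_one_of_forall_intCast_notMem_Ioo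
    (mul_lt_mul_of_pos_right hlt (by exact_mod_cast hJpos v hv))
    (intCast_notMem_Ioo_of_consecutive hβ'0 hβ1 hcons hv (hJpos v hv))
  split_ifs with hdvd
  · obtain ⟨m, hm⟩ := (hint v).mpr hdvd
    rw [hfloor, ← hm, Int.floor_intCast, Int.ceil_intCast]
    push_cast
    ring
  · rw [hfloor, (Int.ceil_eq_floor_add_one_iff_notMem _).mpr ((hint v).not.mpr hdvd)]
    push_cast
    ring

/-- the recursion for `e(p₀, γ)` between consecutive elements
`β' < β` of `Φ ∪ {0}`, where `β = p/n` in lowest terms: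
`e(p₀, β) = e(p₀, β') + ∑_{v ∈ J, n ∣ v} ((p₀-1)v + βv)·d(v)`,
and for `n ∣ v` the number `βv` is an integer. -/
theorem stmt_3 (J : Finset ℕ) (hJne : J.Nonempty) (hJpos : ∀ v ∈ J, 0 < v)
    (Φ : Set ℚ)
    (hΦ : Φ = {β : ℚ | 0 < β ∧ β ≤ 1 ∧ ∃ v ∈ J, ∃ m : ℤ, (v : ℚ) * β = m})
    (β' β : ℚ) (hβ' : β' ∈ Φ ∪ {0}) (hβ : β ∈ Φ ∪ {0}) (hlt : β' < β)
    (hcons : ∀ γ ∈ Φ, ¬(β' < γ ∧ γ < β))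
    (p n : ℕ) (hp : 0 < p) (hn : 0 < n) (hcop : Nat.Coprime p n)
    (hβpn : β = (p : ℚ) / (n : ℚ))
    (d : ℕ → ℕ) (p₀ : ℕ) (hp₀ : 1 ≤ p₀)
    (e : ℚ → ℚ)
    (he : ∀ γ : ℚ, e γ = (1/2 : ℚ) * ∑ v ∈ J, (d v : ℚ) *
        (((p₀ : ℚ) - 1) * (v : ℚ) + (⌊γ * (v : ℚ)⌋ : ℚ)) *
        (((p₀ : ℚ) - 1) * (v : ℚ) + (⌊γ * (v : ℚ)⌋ : ℚ) + 1)) :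
    e β = e β' + ∑ v ∈ J.filter (fun v => n ∣ v),
        (((p₀ : ℚ) - 1) * (v : ℚ) + β * (v : ℚ)) * (d v : ℚ) ∧
    ∀ v ∈ J, n ∣ v → ∃ m : ℤ, β * (v : ℚ) = (m : ℚ) :=
  stmt_3_general J hJpos Φ hΦ β' β hβ' hβ hlt hcons p n hn hcop hβpn d p₀ e he
end

section
/- Let β' and β be consecutive elements of Φ ∪ {0} with β' < β, write β = p/n in lowest terms, let d : J → ℕ be any function, and let p₀ ≥ 1 be an integer. Define d'(p₀, γ) = ∑_{v∈J} d(v)·(⌊γv⌋ + (p₀−1)v) for γ ∈ Φ ∪ {0}. Then d'(p₀, β) = d'(p₀, β') + ∑_{v∈J, n∣v} d(v). -/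
/-!
Write `β = p/n`. For `v ∈ J` the open interval `(β' v, β v)` contains no integer `m`, since
otherwise `m / v ∈ Φ` would lie strictly between `β'` and `β`. Hence `⌊β v⌋ = ⌊β' v⌋` unless `β v`
is itself an integer, in which case `⌊β v⌋ = ⌊β' v⌋ + 1`; and `β v = p v / n` is an integer
exactly when `n ∣ v`. Only the summands with `n ∣ v` therefore grow, each by `d(v)`.
-/

namespace Int

theorem floor_add_one_eq_of_gap {α : Type*} [Ring α] [LinearOrder α] [IsStrictOrderedRing α]
    [FloorRing α] {x : α} {m : ℤ} (hlt : x < m) (hgap : ∀ k : ℤ, x < k → (m : α) ≤ k) :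
    ⌊x⌋ + 1 = m := by
  have hfloor_lt : ⌊x⌋ < m := floor_lt.2 hlt
  have hm_le : m ≤ ⌊x⌋ + 1 := by exact_mod_cast hgap _ (by exact_mod_cast lt_floor_add_one x)
  omega

theorem floor_eq_floor_of_gap {α : Type*} [Ring α] [LinearOrder α] [FloorRing α] {x' x : α}
    (hle : x' ≤ x) (hgap : ∀ k : ℤ, x' < k → x ≤ k) (hx : ∀ k : ℤ, x ≠ k) : ⌊x⌋ = ⌊x'⌋ := by
  refine le_antisymm ?_ (floor_le_floor hle)
  have hx_lt : x < (⌊x'⌋ + 1 : ℤ) :=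
    lt_of_le_of_ne (hgap _ (by exact_mod_cast lt_floor_add_one x')) (hx _)
  exact le_of_lt_add_one (floor_lt.2 hx_lt)

end Int

theorem exists_intCast_eq_div_mul_iff_dvd {p n : ℕ} (hcop : p.Coprime n) (hn : 0 < n) (v : ℕ) :
    (∃ m : ℤ, (p / n : ℚ) * v = m) ↔ n ∣ v := by
  constructor
  · rintro ⟨m, hm⟩
    have hQ : (p : ℚ) * v = m * n := by field_simp at hm; linarith
    have hZ : (n : ℤ) ∣ (p * v : ℕ) := ⟨m, by push_cast; exact_mod_cast hQ.trans (mul_comm _ _)⟩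
    exact hcop.symm.dvd_of_dvd_mul_left (Int.natCast_dvd_natCast.1 hZ)
  · rintro ⟨c, rfl⟩
    exact ⟨p * c, by push_cast; field_simp⟩

/-- The set `Φ` of the paper: the points where some `γ ↦ ⌊γ v⌋`, `v ∈ J`, jumps. -/
def jumpSet (J : Finset ℕ) : Set ℚ :=
  {β : ℚ | 0 < β ∧ β ≤ 1 ∧ ∃ v ∈ J, ∃ m : ℤ, (v : ℚ) * β = m}

theorem le_intCast_of_consecutive {J : Finset ℕ} {β' β : ℚ} (hβ'0 : 0 ≤ β') (hβ1 : β ≤ 1)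
    (hcons : ∀ γ ∈ jumpSet J, ¬(β' < γ ∧ γ < β)) {v : ℕ} (hv : v ∈ J) (hv0 : 0 < v) (k : ℤ)
    (hk : β' * v < k) : β * v ≤ k := by
  by_contra! hkβ
  have hvQ : (0 : ℚ) < v := by exact_mod_cast hv0
  have hβ'k : β' < k / v := by rwa [lt_div_iff₀ hvQ]
  have hkβ' : (k / v : ℚ) < β := by rwa [div_lt_iff₀ hvQ]
  refine hcons (k / v) ⟨lt_of_le_of_lt hβ'0 hβ'k, hkβ'.le.trans hβ1, v, hv, k, ?_⟩ ⟨hβ'k, hkβ'⟩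
  field_simp

theorem floor_mul_eq_of_consecutive {J : Finset ℕ} {β' : ℚ} {p n : ℕ} (hβ'0 : 0 ≤ β')
    (hlt : β' < p / n) (hβ1 : (p / n : ℚ) ≤ 1) (hcons : ∀ γ ∈ jumpSet J, ¬(β' < γ ∧ γ < p / n))
    (hn : 0 < n) (hcop : p.Coprime n) {v : ℕ} (hv : v ∈ J) (hv0 : 0 < v) :
    ⌊(p / n : ℚ) * v⌋ = ⌊β' * v⌋ + if n ∣ v then 1 else 0 := by
  have hgap := le_intCast_of_consecutive hβ'0 hβ1 hcons hv hv0
  have hmul_lt : β' * v < (p / n : ℚ) * v := mul_lt_mul_of_pos_right hlt (by exact_mod_cast hv0)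
  split_ifs with hdvd
  · obtain ⟨m, hm⟩ := (exists_intCast_eq_div_mul_iff_dvd hcop hn v).2 hdvd
    rw [hm, Int.floor_intCast]
    exact (Int.floor_add_one_eq_of_gap (hm ▸ hmul_lt) (hm ▸ hgap)).symm
  · have hnot_int : ∀ k : ℤ, (p / n : ℚ) * v ≠ k := fun k hk =>
      hdvd ((exists_intCast_eq_div_mul_iff_dvd hcop hn v).1 ⟨k, hk⟩)
    rw [add_zero]
    exact Int.floor_eq_floor_of_gap hmul_lt.le hgap hnot_int

theorem stmt_4_general (J : Finset ℕ) (hJpos : ∀ v ∈ J, 0 < v)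
    (Φ : Set ℚ)
    (hΦ : Φ = {β : ℚ | 0 < β ∧ β ≤ 1 ∧ ∃ v ∈ J, ∃ m : ℤ, (v : ℚ) * β = m})
    (β' β : ℚ) (hβ' : β' ∈ Φ ∪ {0}) (hβ : β ∈ Φ ∪ {0}) (hlt : β' < β)
    (hcons : ∀ γ ∈ Φ, ¬(β' < γ ∧ γ < β))
    (p n : ℕ) (hn : 0 < n) (hcop : Nat.Coprime p n)
    (hβpn : β = (p : ℚ) / (n : ℚ))
    (d : ℕ → ℕ) (p₀ : ℕ)
    (d' : ℚ → ℚ)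
    (hd' : ∀ γ : ℚ, d' γ = ∑ v ∈ J, (d v : ℚ) *
        ((⌊γ * (v : ℚ)⌋ : ℚ) + ((p₀ : ℚ) - 1) * (v : ℚ))) :
    d' β = d' β' + ∑ v ∈ J.filter (fun v => n ∣ v), (d v : ℚ) := by
  change Φ = jumpSet J at hΦ
  subst hΦ hβpn
  have hβ'0 : 0 ≤ β' := by
    rcases hβ' with hβ' | rfl
    exacts [hβ'.1.le, le_rfl]
  have hβ1 : (p / n : ℚ) ≤ 1 := by
    rcases hβ with hβ | hβ
    exacts [hβ.2.1, absurd (Set.mem_singleton_iff.1 hβ) (hβ'0.trans_lt hlt).ne']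
  rw [hd', hd', Finset.sum_filter, ← Finset.sum_add_distrib]
  refine Finset.sum_congr rfl fun v hv => ?_
  rw [floor_mul_eq_of_consecutive hβ'0 hlt hβ1 hcons hn hcop hv (hJpos v hv)]
  split_ifs <;> push_cast <;> ring

/-- the recursion for `d'(p₀, γ)` between consecutive elements
`β' < β` of `Φ ∪ {0}`, where `β = p/n` in lowest terms:
`d'(p₀, β) = d'(p₀, β') + ∑_{v ∈ J, n ∣ v} d(v)`. -/
theorem stmt_4 (J : Finset ℕ) (hJne : J.Nonempty) (hJpos : ∀ v ∈ J, 0 < v)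
    (Φ : Set ℚ)
    (hΦ : Φ = {β : ℚ | 0 < β ∧ β ≤ 1 ∧ ∃ v ∈ J, ∃ m : ℤ, (v : ℚ) * β = m})
    (β' β : ℚ) (hβ' : β' ∈ Φ ∪ {0}) (hβ : β ∈ Φ ∪ {0}) (hlt : β' < β)
    (hcons : ∀ γ ∈ Φ, ¬(β' < γ ∧ γ < β))
    (p n : ℕ) (hp : 0 < p) (hn : 0 < n) (hcop : Nat.Coprime p n)
    (hβpn : β = (p : ℚ) / (n : ℚ))
    (d : ℕ → ℕ) (p₀ : ℕ) (hp₀ : 1 ≤ p₀)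
    (d' : ℚ → ℚ)
    (hd' : ∀ γ : ℚ, d' γ = ∑ v ∈ J, (d v : ℚ) *
        ((⌊γ * (v : ℚ)⌋ : ℚ) + ((p₀ : ℚ) - 1) * (v : ℚ))) :
    d' β = d' β' + ∑ v ∈ J.filter (fun v => n ∣ v), (d v : ℚ) :=
  stmt_4_general J hJpos Φ hΦ β' β hβ' hβ hlt hcons p n hn hcop hβpn d p₀ d' hd'
end
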